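/- Let X be the Jacobi matrix of the Jacobi sequence ω n = (n+1)² and α n = 2n + 1 (the quantum decomposition of the exponential distribution). Then for every natural number m, lim_{k→∞} ⟨((X − (2k+1))/√((k+1)² + k²))^m e_k, e_k⟩ = ∫_{−√2}^{√2} x^m/(π√(2−x²)) dx. -/

import Mathlib

open Filter

/-- The Jacobi matrix of a Jacobi sequence `(ω, α)`, acting on finitely supported
real sequences indexed by `ℕ`:
`X e_n = √(ω n)·e_{n+1} + α n·e_n + √(ω (n-1))·e_{n-1}`, last term omitted for `n = 0`. -/
noncomputable def jacobiOp (ω α : ℕ → ℝ) : (ℕ →₀ ℝ) →ₗ[ℝ] (ℕ →₀ ℝ) :=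
  Finsupp.lsum ℝ fun n => LinearMap.toSpanSingleton ℝ (ℕ →₀ ℝ)
    (Real.sqrt (ω n) • Finsupp.single (n + 1) 1 + α n • Finsupp.single n 1 +
      if n = 0 then 0 else Real.sqrt (ω (n - 1)) • Finsupp.single (n - 1) 1)

/-!
Write `s_k = √((k+1)² + k²)` and `Y_k = (X - (2k+1)) / s_k`. The `p`-th coordinate of `Y_k w` is
`(p w_{p-1} + 2(p-k) w_p + (p+1) w_{p+1}) / s_k`; at a fixed distance `d = p - k` from the diagonal
these three weights tend to `1/√2`, `0`, `1/√2`. So in coordinates centred at `k`, `Y_k` converges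
entrywise to `(S + S⁻¹)/√2` on `ℤ`, `S` the shift, and `⟨Y_k^m e_k, e_k⟩` tends to `√2⁻ᵐ` times the
number of `±1` walks of length `m` from `0` back to `0`: `binom(2t, t) / 2^t` if `m = 2t`, and `0`
if `m` is odd. The substitution `x = √2 sin θ` turns the arcsine moment into
`√2^m / π · ∫_{-π/2}^{π/2} sin^m θ dθ`, and Wallis' reduction formula gives the same numbers.
-/

open Real Set MeasureTheory Topology

theorem jacobiOp_apply (ω α : ℕ → ℝ) (w : ℕ →₀ ℝ) (p : ℕ) :
    jacobiOp ω α w p = (if p = 0 then 0 else √(ω (p - 1)) * w (p - 1)) + α p * w p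
      + √(ω p) * w (p + 1) := by
  induction w using Finsupp.induction_linear with
  | zero => simp
  | add f g hf hg => simp only [map_add, Finsupp.add_apply, hf, hg]; split_ifs <;> ring
  | single a b =>
    rcases a with _ | a <;> simp [jacobiOp, Finsupp.single_apply] <;> split_ifs <;> grind

noncomputable def expJacobi : Module.End ℝ (ℕ →₀ ℝ) :=
  jacobiOp (fun n => ((n : ℝ) + 1) ^ 2) (fun n => 2 * (n : ℝ) + 1)

theorem expJacobi_apply (w : ℕ →₀ ℝ) (p : ℕ) :
    expJacobi w p = p * w (p - 1) + (2 * p + 1) * w p + (p + 1) * w (p + 1) := by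
  have hsqrt (n : ℕ) : √(((n : ℝ) + 1) ^ 2) = n + 1 := Real.sqrt_sq (by positivity)
  rw [expJacobi, jacobiOp_apply]
  simp only [hsqrt]
  rcases p with _ | p <;> simp

noncomputable def expScale (k : ℕ) : ℝ := √(((k : ℝ) + 1) ^ 2 + (k : ℝ) ^ 2)

noncomputable def normalizedExpJacobi (k : ℕ) : Module.End ℝ (ℕ →₀ ℝ) :=
  (1 / expScale k) • (expJacobi - (2 * (k : ℝ) + 1) • 1)

theorem normalizedExpJacobi_apply (k : ℕ) (w : ℕ →₀ ℝ) (p : ℕ) :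
    normalizedExpJacobi k w p
      = (p * w (p - 1) + 2 * (p - k) * w p + (p + 1) * w (p + 1)) / expScale k := by
  simp only [normalizedExpJacobi, LinearMap.smul_apply, LinearMap.sub_apply, Module.End.one_apply,
    Finsupp.smul_apply, Finsupp.sub_apply, expJacobi_apply, smul_eq_mul]
  ring

theorem tendsto_add_div_expScale (c : ℝ) :
    Tendsto (fun k : ℕ => (k + c) / expScale k) atTop (𝓝 (√2)⁻¹) := by
  have hcont : Continuous fun x : ℝ => (1 + c * x) / √((1 + x) ^ 2 + 1) :=
    Continuous.div (by fun_prop) (by fun_prop) fun x => by positivity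
  have hlim : Tendsto (fun x : ℝ => (1 + c * x) / √((1 + x) ^ 2 + 1)) (𝓝 0) (𝓝 (√2)⁻¹) := by
    simpa [one_add_one_eq_two] using hcont.tendsto 0
  have hinv : Tendsto (fun k : ℕ => (k : ℝ)⁻¹) atTop (𝓝 0) :=
    tendsto_inv_atTop_zero.comp tendsto_natCast_atTop_atTop
  refine (hlim.comp hinv).congr' ?_
  filter_upwards [eventually_gt_atTop 0] with k hk
  have hk : (0 : ℝ) < k := by exact_mod_cast hk
  have hsq : (1 + (k : ℝ)⁻¹) ^ 2 + 1 = (((k : ℝ) + 1) ^ 2 + (k : ℝ) ^ 2) / (k : ℝ) ^ 2 := by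
    field_simp
  simp only [Function.comp_apply, expScale, hsq, Real.sqrt_div' _ (sq_nonneg _), Real.sqrt_sq hk.le]
  field_simp

theorem tendsto_const_div_expScale (c : ℝ) :
    Tendsto (fun k : ℕ => c / expScale k) atTop (𝓝 0) := by
  simpa [← sub_div] using (tendsto_add_div_expScale c).sub (tendsto_add_div_expScale 0)

def walkCount : ℕ → ℤ → ℕ
  | 0, d => if d = 0 then 1 else 0
  | j + 1, d => walkCount j (d - 1) + walkCount j (d + 1)

theorem walkCount_eq_zero {j : ℕ} {d : ℤ} (h : ∀ t : ℕ, d ≠ 2 * t - j) : walkCount j d = 0 := by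
  induction j generalizing d with
  | zero => simpa [walkCount] using h 0
  | succ j ih =>
    rw [walkCount, ih fun t ht => h (t + 1) (by push_cast at ht ⊢; omega),
      ih fun t ht => h t (by push_cast at ht ⊢; omega)]

theorem walkCount_two_mul_sub (j t : ℕ) : walkCount j (2 * t - j) = j.choose t := by
  induction j generalizing t with
  | zero => rcases t with _ | t <;> simp [walkCount]; omega
  | succ j ih =>
    rw [walkCount]
    rcases t with _ | t
    · rw [walkCount_eq_zero fun s hs => by omega]
      simpa using ih 0
    · rw [Nat.choose_succ_succ, ← ih t, ← ih (t + 1)]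
      congr 2 <;> push_cast <;> ring

theorem walkCount_two_mul_zero (t : ℕ) : walkCount (2 * t) 0 = Nat.centralBinom t := by
  simpa [Nat.centralBinom] using walkCount_two_mul_sub (2 * t) t

theorem walkCount_two_mul_add_one_zero (t : ℕ) : walkCount (2 * t + 1) 0 = 0 :=
  walkCount_eq_zero fun s hs => by omega

theorem tendsto_normalizedExpJacobi_pow_apply (j : ℕ) (d : ℤ) :
    Tendsto (fun k : ℕ => (normalizedExpJacobi k ^ j) (Finsupp.single k 1) (k + d).toNat) atTop
      (𝓝 (walkCount j d / √2 ^ j)) := by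
  induction j generalizing d with
  | zero =>
    refine tendsto_const_nhds.congr' ?_
    filter_upwards [eventually_gt_atTop d.natAbs] with k hk
    rcases eq_or_ne d 0 with rfl | hd
    · simp [walkCount]
    · simp [walkCount, hd, Finsupp.single_apply]
      omega
  | succ j ih =>
    have hlim := (((tendsto_add_div_expScale d).mul (ih (d - 1))).add
      ((tendsto_const_div_expScale (2 * d)).mul (ih d))).add
      ((tendsto_add_div_expScale (d + 1)).mul (ih (d + 1)))
    refine hlim.congr' ?_ |>.trans_eq ?_
    · filter_upwards [eventually_gt_atTop d.natAbs] with k hk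
      have hq : ((((k : ℤ) + d).toNat : ℕ) : ℝ) = k + d := by
        exact_mod_cast (show ((((k : ℤ) + d).toNat : ℕ) : ℤ) = k + d by omega)
      rw [pow_succ', Module.End.mul_apply, normalizedExpJacobi_apply, hq,
        show ((k : ℤ) + (d - 1)).toNat = ((k : ℤ) + d).toNat - 1 by omega,
        show ((k : ℤ) + (d + 1)).toNat = ((k : ℤ) + d).toNat + 1 by omega]
      ring
    · rw [walkCount]
      congr 1
      push_cast
      field_simp
      ring

theorem image_mul_sin_Ioo {c : ℝ} (hc : 0 < c) :
    (fun θ => c * sin θ) '' Ioo (-(π / 2)) (π / 2) = Ioo (-c) c := by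
  have hsin : sin '' Ioo (-(π / 2)) (π / 2) = Ioo (-1) 1 :=
    sinPartialHomeomorph.image_source_eq_target
  rw [← image_image (c * ·) sin, hsin, image_mul_left_Ioo hc, mul_neg_one, mul_one]

theorem integral_pow_div_sqrt_sub_sq (m : ℕ) {c : ℝ} (hc : 0 < c) :
    ∫ x in (-√c)..√c, x ^ m / (π * √(c - x ^ 2))
      = √c ^ m / π * ∫ θ in (-(π / 2))..(π / 2), sin θ ^ m := by
  have hsc : 0 < √c := sqrt_pos.2 hc
  rw [intervalIntegral.integral_of_le (by linarith), integral_Ioc_eq_integral_Ioo,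
    ← image_mul_sin_Ioo hsc, integral_image_eq_integral_abs_deriv_smul measurableSet_Ioo
      (fun θ _ => ((hasDerivAt_sin θ).const_mul √c).hasDerivWithinAt)
      ((mul_right_injective₀ hsc.ne').comp_injOn sinPartialHomeomorph.injOn),
    intervalIntegral.integral_of_le (by linarith [pi_pos]), integral_Ioc_eq_integral_Ioo,
    ← integral_const_mul]
  refine setIntegral_congr_fun measurableSet_Ioo fun θ hθ => ?_
  have hcos : 0 < cos θ := cos_pos_of_mem_Ioo hθ
  have hroot : √(c - (√c * sin θ) ^ 2) = √c * cos θ := by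
    rw [mul_pow, sq_sqrt hc.le, ← mul_one_sub, ← cos_sq', sqrt_mul hc.le, sqrt_sq hcos.le]
  simp only [smul_eq_mul, hroot, abs_of_pos (mul_pos hsc hcos)]
  field_simp
  ring

theorem integral_sin_pow_add_two_symm (n : ℕ) :
    ∫ θ in (-(π / 2))..(π / 2), sin θ ^ (n + 2)
      = (n + 1) / (n + 2) * ∫ θ in (-(π / 2))..(π / 2), sin θ ^ n := by
  simp [integral_sin_pow]

theorem integral_sin_pow_two_mul_symm (t : ℕ) :
    ∫ θ in (-(π / 2))..(π / 2), sin θ ^ (2 * t) = π * Nat.centralBinom t / 4 ^ t := by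
  induction t with
  | zero => simp
  | succ t ih =>
    have hcb : ((t + 1 : ℕ) : ℝ) * Nat.centralBinom (t + 1)
        = 2 * (2 * t + 1) * Nat.centralBinom t := by
      exact_mod_cast Nat.succ_mul_centralBinom_succ t
    rw [mul_add_one, integral_sin_pow_add_two_symm, ih]
    push_cast at hcb ⊢
    field_simp
    rw [pow_succ]
    linear_combination (-2 * 4 ^ t : ℝ) * hcb

theorem integral_sin_pow_two_mul_add_one_symm (t : ℕ) :
    ∫ θ in (-(π / 2))..(π / 2), sin θ ^ (2 * t + 1) = 0 := by
  induction t with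
  | zero => simp [integral_sin]
  | succ t ih =>
    rw [show 2 * (t + 1) + 1 = 2 * t + 1 + 2 by ring, integral_sin_pow_add_two_symm, ih, mul_zero]

theorem arcsine_moment_eq_walkCount (m : ℕ) :
    ∫ x in (-√2)..√2, x ^ m / (π * √(2 - x ^ 2)) = walkCount m 0 / √2 ^ m := by
  rw [integral_pow_div_sqrt_sub_sq m two_pos]
  obtain ⟨t, rfl | rfl⟩ := m.even_or_odd'
  · rw [integral_sin_pow_two_mul_symm, walkCount_two_mul_zero, pow_mul, sq_sqrt zero_le_two,
      show (4 : ℝ) ^ t = 2 ^ t * 2 ^ t by rw [← mul_pow]; norm_num]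
    field_simp
  · rw [integral_sin_pow_two_mul_add_one_symm, walkCount_two_mul_add_one_zero]
    simp

theorem exponential_classical_limit_arcsine (m : ℕ) :
    Tendsto
      (fun k : ℕ =>
        ((((1 / Real.sqrt (((k : ℝ) + 1) ^ 2 + (k : ℝ) ^ 2)) •
            (jacobiOp (fun n => ((n : ℝ) + 1) ^ 2) (fun n => 2 * (n : ℝ) + 1) -
              (2 * (k : ℝ) + 1) • (1 : (ℕ →₀ ℝ) →ₗ[ℝ] (ℕ →₀ ℝ)))) ^ m)
          (Finsupp.single k 1)) k)
      atTop
      (nhds (∫ x in (-Real.sqrt 2)..(Real.sqrt 2), x ^ m / (Real.pi * Real.sqrt (2 - x ^ 2)))) := by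
  have h := tendsto_normalizedExpJacobi_pow_apply m 0
  simp only [add_zero, Int.toNat_natCast] at h
  rw [arcsine_moment_eq_walkCount]
  exact h
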